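/- arXiv:2012.12493 — 6 statements merged into one kernel-verified Lean document; each statement's English description precedes it below -/
import Mathlib

section
/- Let f : ℝ × ℝ → ℝ and define f̄(ē, u) = −f(u − ē, u). Suppose V : ℝ → ℝ is differentiable and there are constants c₁, c₂, c₃, c₄ > 0 such that for all ē, u ∈ ℝ: c₁ē² ≤ V(ē) ≤ c₂ē², V′(ē)·f̄(ē, u) ≤ −c₃ē², and |V′(ē)| ≤ c₄|ē|. Let r ∈ ℝ and let 0 < λ < 4c₃/(1 + c₄)². Then there is a constant κ > 0 (one may take κ = p_min/(c₂ + 1), where p_min is the smallest eigenvalue of the matrix Q = [[c₃, λ(1+c₄)/2], [λ(1+c₄)/2, λ]]) such that every pair of differentiable functions x, u : [0, ∞) → ℝ satisfying ẋ(t) = f(x(t), u(t)) and u̇(t) = λ(r − x(t)) obeys V̄(t) ≤ V̄(0)·e^{−κt} for all t ≥ 0, where V̄(t) = V(u(t) − x(t)) + ½(u(t) − r)². Consequently |x(t) − r| and |u(t) − r| converge to 0 exponentially as t → ∞. -/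
private lemma amgm_aux (A B b p q : ℝ) (hA : 0 < A) (hb : b ^ 2 ≤ A * B)
    (hp : 0 ≤ p) (hq : 0 ≤ q) : 2 * b * (p * q) ≤ A * p ^ 2 + B * q ^ 2 := by
  nlinarith [sq_nonneg (A * p - b * q), mul_nonneg (sq_nonneg q) (sub_nonneg.2 hb),
    mul_nonneg hp hq]

set_option maxHeartbeats 1000000 in
/-- Theorem 1: a first-order plant `ẋ = f(x,u)` whose open-loop error
`ē = u − x` is globally exponentially stable (witnessed by a converse-Lyapunov
function `V` with quadratic bounds), compensated by the integral control
`u̇ = λ(r − x)` with `0 < λ < 4c₃/(1+c₄)²`, is globally exponentially stable at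
`x = u = r`: the Lyapunov function `V̄ = V(u−x) + ½(u−r)²` decays exponentially,
and `x`, `u` converge exponentially to `r`. -/
theorem first_order_exponential_stability
    (f : ℝ → ℝ → ℝ) (V : ℝ → ℝ) (hV : Differentiable ℝ V)
    (c₁ c₂ c₃ c₄ : ℝ) (hc₁ : 0 < c₁) (hc₂ : 0 < c₂) (hc₃ : 0 < c₃) (hc₄ : 0 < c₄)
    (hVlow : ∀ ebar : ℝ, c₁ * ebar ^ 2 ≤ V ebar)
    (hVhigh : ∀ ebar : ℝ, V ebar ≤ c₂ * ebar ^ 2)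
    (hVdecay : ∀ ebar u : ℝ, deriv V ebar * (-f (u - ebar) u) ≤ -c₃ * ebar ^ 2)
    (hVslope : ∀ ebar : ℝ, |deriv V ebar| ≤ c₄ * |ebar|)
    (r lam : ℝ) (hlam : 0 < lam) (hlam' : lam < 4 * c₃ / (1 + c₄) ^ 2) :
    ∃ κ > 0, ∀ x u : ℝ → ℝ,
      (∀ t, 0 ≤ t → HasDerivAt x (f (x t) (u t)) t) →
      (∀ t, 0 ≤ t → HasDerivAt u (lam * (r - x t)) t) →
      (∀ t, 0 ≤ t →
        V (u t - x t) + (u t - r) ^ 2 / 2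
          ≤ (V (u 0 - x 0) + (u 0 - r) ^ 2 / 2) * Real.exp (-κ * t)) ∧
      ∃ M γ : ℝ, 0 < γ ∧
        (∀ t, 0 ≤ t → |x t - r| ≤ M * Real.exp (-γ * t)) ∧
        (∀ t, 0 ≤ t → |u t - r| ≤ M * Real.exp (-γ * t)) := by
  have h1c₄ : (0:ℝ) < 1 + c₄ := by linarith
  set b : ℝ := lam * (1 + c₄) / 2 with hbdef
  have hbpos : 0 < b := by positivity
  have hbb : b ^ 2 < c₃ * lam := by
    have h : lam * (1 + c₄) ^ 2 < 4 * c₃ := (lt_div_iff₀ (by positivity)).mp hlam'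
    nlinarith
  set δ : ℝ := min (c₃ / 2) (min (lam / 2) ((c₃ * lam - b ^ 2) / (2 * (c₃ + lam)))) with hδdef
  have hδpos : 0 < δ := by
    apply lt_min (by linarith)
    apply lt_min (by linarith)
    apply div_pos (by linarith) (by linarith)
  have hδ1 : δ ≤ c₃ / 2 := min_le_left _ _
  have hδ2 : δ ≤ lam / 2 := (min_le_right _ _).trans (min_le_left _ _)
  have hδ3 : δ ≤ (c₃ * lam - b ^ 2) / (2 * (c₃ + lam)) :=
    (min_le_right _ _).trans (min_le_right _ _)
  have hδ3' : δ * (2 * (c₃ + lam)) ≤ c₃ * lam - b ^ 2 := by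
    rw [← le_div_iff₀ (by positivity)]; exact hδ3
  have hdet : b ^ 2 ≤ (c₃ - δ) * (lam - δ) := by nlinarith [sq_nonneg δ]
  set κ : ℝ := δ / (c₂ + 1) with hκdef
  have hκpos : 0 < κ := by positivity
  have hκδ : κ * (c₂ + 1) = δ := div_mul_cancel₀ _ (by positivity)
  clear_value δ κ
  refine ⟨κ, hκpos, fun x u hx hu => ?_⟩
  set W : ℝ → ℝ := fun t => V (u t - x t) + (u t - r) ^ 2 / 2 with hWdef
  set D : ℝ → ℝ := fun t =>
    deriv V (u t - x t) * (lam * (r - x t) - f (x t) (u t))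
      + (u t - r) * (lam * (r - x t)) with hDdef
  -- derivative of W
  have hWd : ∀ t, 0 ≤ t → HasDerivAt W (D t) t := by
    intro t ht
    have h1 : HasDerivAt (fun s => V (u s - x s))
        (deriv V (u t - x t) * (lam * (r - x t) - f (x t) (u t))) t :=
      ((hV (u t - x t)).hasDerivAt).comp t ((hu t ht).sub (hx t ht))
    have h2 : HasDerivAt (fun s => (u s - r) ^ 2 / 2)
        ((u t - r) * (lam * (r - x t))) t := by
      have := (((hu t ht).sub_const r).pow 2).div_const 2
      exact this.congr_deriv (by ring)
    exact h1.add h2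
  -- key differential inequality
  have hkey : ∀ t, 0 ≤ t → D t ≤ -κ * W t := by
    intro t ht
    set e : ℝ := u t - x t with hedef
    set w : ℝ := x t - r with hwdef
    set d : ℝ := deriv V e with hddef
    have hd1 : d * (-f (x t) (u t)) ≤ -c₃ * e ^ 2 := by
      have := hVdecay e (u t)
      rwa [show u t - e = x t by rw [hedef]; ring] at this
    have hd2 : |d| ≤ c₄ * |e| := hVslope e
    have habs1 : -(d * w) ≤ c₄ * (|e| * |w|) := by
      calc -(d * w) ≤ |d * w| := neg_le_abs _
        _ = |d| * |w| := abs_mul _ _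
        _ ≤ c₄ * |e| * |w| := mul_le_mul_of_nonneg_right hd2 (abs_nonneg w)
        _ = c₄ * (|e| * |w|) := by ring
    have habs2 : -(e * w) ≤ |e| * |w| := by
      calc -(e * w) ≤ |e * w| := neg_le_abs _
        _ = |e| * |w| := abs_mul _ _
    have hC : 2 * b * (|e| * |w|) ≤ (c₃ - δ) * e ^ 2 + (lam - δ) * w ^ 2 := by
      have := amgm_aux (c₃ - δ) (lam - δ) b |e| |w| (by linarith) hdet
        (abs_nonneg e) (abs_nonneg w)
      simpa [sq_abs] using this
    have hVe : V e ≤ c₂ * e ^ 2 := hVhigh e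
    have hz : u t - r = e + w := by rw [hedef, hwdef]; ring
    have hrx : r - x t = -w := by rw [hwdef]; ring
    show deriv V (u t - x t) * (lam * (r - x t) - f (x t) (u t))
        + (u t - r) * (lam * (r - x t)) ≤ -κ * (V (u t - x t) + (u t - r) ^ 2 / 2)
    rw [← hedef, ← hddef, hz, hrx]
    clear_value e w d
    have hA1 : lam * (-(d * w)) ≤ lam * (c₄ * (|e| * |w|)) :=
      mul_le_mul_of_nonneg_left habs1 hlam.le
    have hA2 : lam * (-(e * w)) ≤ lam * (|e| * |w|) :=
      mul_le_mul_of_nonneg_left habs2 hlam.le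
    have lhs_eq : d * (lam * -w - f (x t) (u t)) + (e + w) * (lam * -w)
        = d * (-f (x t) (u t)) + lam * (-(d * w)) + lam * (-(e * w)) - lam * w ^ 2 := by
      ring
    have h2b : lam * (c₄ * (|e| * |w|)) + lam * (|e| * |w|) = 2 * b * (|e| * |w|) := by
      rw [hbdef]; ring
    have step1 : d * (lam * -w - f (x t) (u t)) + (e + w) * (lam * -w)
        ≤ -δ * e ^ 2 - δ * w ^ 2 := by
      rw [lhs_eq]
      linarith only [hd1, hA1, hA2, hC, h2b]
    have h5 : V e + (e + w) ^ 2 / 2 ≤ (c₂ + 1) * (e ^ 2 + w ^ 2) := by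
      nlinarith [sq_nonneg (e - w), mul_nonneg hc₂.le (sq_nonneg w), mul_nonneg hc₂.le (sq_nonneg e)]
    have h6 : κ * (V e + (e + w) ^ 2 / 2) ≤ κ * ((c₂ + 1) * (e ^ 2 + w ^ 2)) :=
      mul_le_mul_of_nonneg_left h5 hκpos.le
    have h7 : κ * ((c₂ + 1) * (e ^ 2 + w ^ 2)) = δ * (e ^ 2 + w ^ 2) := by
      rw [← hκδ]; ring
    linarith only [step1, h6, h7]
  -- Gronwall via antitone auxiliary function
  set g : ℝ → ℝ := fun t => W t * Real.exp (κ * t) with hgdef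
  have hgd : ∀ t, 0 ≤ t → HasDerivAt g ((D t + κ * W t) * Real.exp (κ * t)) t := by
    intro t ht
    have hexp : HasDerivAt (fun s : ℝ => Real.exp (κ * s)) (Real.exp (κ * t) * κ) t := by
      simpa using ((hasDerivAt_id t).const_mul κ).exp
    have := (hWd t ht).mul hexp
    exact this.congr_deriv (by ring)
  have hanti : AntitoneOn g (Set.Ici (0:ℝ)) := by
    apply antitoneOn_of_deriv_nonpos (convex_Ici 0)
    · exact fun t ht => (hgd t ht).continuousAt.continuousWithinAt
    · rw [interior_Ici]
      exact fun t ht => (hgd t (le_of_lt ht)).differentiableAt.differentiableWithinAt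
    · rw [interior_Ici]
      intro t ht
      rw [(hgd t (le_of_lt ht)).deriv]
      have h1 := hkey t (le_of_lt ht)
      have hE := Real.exp_pos (κ * t)
      nlinarith
  have hmain : ∀ t, 0 ≤ t → W t ≤ W 0 * Real.exp (-κ * t) := by
    intro t ht
    have h := hanti (Set.self_mem_Ici) (Set.mem_Ici.2 ht) ht
    have hE := Real.exp_pos (κ * t)
    rw [show -κ * t = -(κ * t) by ring, Real.exp_neg, ← div_eq_mul_inv,
      le_div_iff₀ hE]
    simpa [hgdef] using h
  refine ⟨hmain, ?_⟩
  have hW0 : 0 ≤ W 0 := by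
    have h1 := hVlow (u 0 - x 0)
    have h2 := sq_nonneg (u 0 - x 0)
    have h3 := sq_nonneg (u 0 - r)
    show 0 ≤ V (u 0 - x 0) + (u 0 - r) ^ 2 / 2
    nlinarith
  obtain ⟨C, hC0, hCmain⟩ : ∃ C : ℝ, 0 ≤ C ∧ ∀ t, 0 ≤ t →
      V (u t - x t) + (u t - r) ^ 2 / 2 ≤ C * Real.exp (-κ * t) :=
    ⟨W 0, hW0, hmain⟩
  have hbounds : ∀ t, 0 ≤ t →
      |u t - x t| ≤ Real.sqrt (C / c₁) * Real.exp (-(κ / 2) * t) ∧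
      |u t - r| ≤ Real.sqrt (2 * C) * Real.exp (-(κ / 2) * t) := by
    intro t ht
    have hWt := hCmain t ht
    set E : ℝ := Real.exp (-(κ / 2) * t) with hEdef
    have hEpos : 0 < E := Real.exp_pos _
    have hE2 : E ^ 2 = Real.exp (-κ * t) := by
      rw [hEdef, sq, ← Real.exp_add]; ring_nf
    have hWtlow : V (u t - x t) + (u t - r) ^ 2 / 2 ≤ C * E ^ 2 := by
      rw [hE2]; exact hWt
    have hVe := hVlow (u t - x t)
    clear_value E
    constructor
    · have hsq : (u t - x t) ^ 2 ≤ (Real.sqrt (C / c₁) * E) ^ 2 := by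
        rw [mul_pow, Real.sq_sqrt (by positivity)]
        have h3 := sq_nonneg (u t - r)
        rw [div_mul_eq_mul_div, le_div_iff₀ hc₁]
        linarith
      have h := Real.sqrt_le_sqrt hsq
      rwa [Real.sqrt_sq_eq_abs, Real.sqrt_sq (by positivity)] at h
    · have hsq : (u t - r) ^ 2 ≤ (Real.sqrt (2 * C) * E) ^ 2 := by
        rw [mul_pow, Real.sq_sqrt (by positivity)]
        nlinarith [sq_nonneg (u t - x t), mul_nonneg hc₁.le (sq_nonneg (u t - x t))]
      have h := Real.sqrt_le_sqrt hsq
      rwa [Real.sqrt_sq_eq_abs, Real.sqrt_sq (by positivity)] at h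
  refine ⟨Real.sqrt (C / c₁) + Real.sqrt (2 * C), κ / 2, by positivity, ?_, ?_⟩
  · intro t ht
    obtain ⟨he, hz⟩ := hbounds t ht
    have hxr : x t - r = (u t - r) - (u t - x t) := by ring
    rw [hxr]
    calc |(u t - r) - (u t - x t)| ≤ |u t - r| + |u t - x t| := abs_sub _ _
      _ ≤ Real.sqrt (2 * C) * Real.exp (-(κ / 2) * t)
          + Real.sqrt (C / c₁) * Real.exp (-(κ / 2) * t) := add_le_add hz he
      _ = (Real.sqrt (C / c₁) + Real.sqrt (2 * C)) * Real.exp (-(κ / 2) * t) := by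
          ring
  · intro t ht
    obtain ⟨-, hz⟩ := hbounds t ht
    calc |u t - r| ≤ Real.sqrt (2 * C) * Real.exp (-(κ / 2) * t) := hz
      _ ≤ (Real.sqrt (C / c₁) + Real.sqrt (2 * C)) * Real.exp (-(κ / 2) * t) := by
          have h1 := Real.sqrt_nonneg (C / c₁)
          have h2 := (Real.exp_pos (-(κ / 2) * t)).le
          nlinarith
end

section
/- Let f : ℝ × ℝ → ℝ and define f̄(ē, u) = −f(u − ē, u). Suppose V : ℝ → ℝ is differentiable and there are constants c₃, c₄ > 0 such that for all ē, u ∈ ℝ: V′(ē)·f̄(ē, u) ≤ −c₃ē² and |V′(ē)| ≤ c₄|ē|. Let r ∈ ℝ, λ > 0, and let x, u : [0, ∞) → ℝ be differentiable with ẋ(t) = f(x(t), u(t)) and u̇(t) = λ(r − x(t)). Set ē(t) = u(t) − x(t), e(t) = r − x(t), and V̄(t) = V(ē(t)) + ½(u(t) − r)². Then V̄ is differentiable and for all t ≥ 0: d/dt V̄(t) ≤ −c₃·ē(t)² − λ·e(t)² + λ(1 + c₄)·|e(t)|·|ē(t)|. -/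
/-- The key Lyapunov-derivative inequality in the proof of Theorem 1: along
trajectories of the closed loop `ẋ = f(x,u)`, `u̇ = λ(r − x)`, the function
`V̄(t) = V(u(t)−x(t)) + ½(u(t)−r)²` is differentiable and satisfies
`V̄̇ ≤ −c₃ē² − λe² + λ(1+c₄)|e||ē|` with `ē = u − x`, `e = r − x`. -/
theorem lyapunov_derivative_inequality
    (f : ℝ → ℝ → ℝ) (V : ℝ → ℝ) (hV : Differentiable ℝ V)
    (c₃ c₄ : ℝ) (hc₃ : 0 < c₃) (hc₄ : 0 < c₄)
    (hVdecay : ∀ ebar u : ℝ, deriv V ebar * (-f (u - ebar) u) ≤ -c₃ * ebar ^ 2)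
    (hVslope : ∀ ebar : ℝ, |deriv V ebar| ≤ c₄ * |ebar|)
    (r lam : ℝ) (hlam : 0 < lam)
    (x u : ℝ → ℝ)
    (hx : ∀ t, 0 ≤ t → HasDerivAt x (f (x t) (u t)) t)
    (hu : ∀ t, 0 ≤ t → HasDerivAt u (lam * (r - x t)) t) :
    ∀ t, 0 ≤ t →
      DifferentiableAt ℝ (fun s => V (u s - x s) + (u s - r) ^ 2 / 2) t ∧
      deriv (fun s => V (u s - x s) + (u s - r) ^ 2 / 2) t
        ≤ -c₃ * (u t - x t) ^ 2 - lam * (r - x t) ^ 2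
            + lam * (1 + c₄) * |r - x t| * |u t - x t| := by
  intro t ht
  have hxd := hx t ht
  have hud := hu t ht
  have hebar : HasDerivAt (fun s => u s - x s)
      (lam * (r - x t) - f (x t) (u t)) t := hud.sub hxd
  have hVe : HasDerivAt (fun s => V (u s - x s))
      (deriv V (u t - x t) * (lam * (r - x t) - f (x t) (u t))) t :=
    (hV (u t - x t)).hasDerivAt.comp t hebar
  have hq : HasDerivAt (fun s => (u s - r) ^ 2 / 2)
      ((u t - r) * (lam * (r - x t))) t := by
    have h1 : HasDerivAt (fun s => u s - r) (lam * (r - x t)) t := hud.sub_const r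
    have h2 := (h1.pow 2).div_const 2
    refine h2.congr_deriv ?_
    push_cast
    ring
  have htot := hVe.add hq
  refine ⟨htot.differentiableAt, ?_⟩
  rw [show deriv (fun s => V (u s - x s) + (u s - r) ^ 2 / 2) t = _ from htot.deriv]
  have hdec := hVdecay (u t - x t) (u t)
  have hxeq : u t - (u t - x t) = x t := by ring
  rw [hxeq] at hdec
  have hslope := hVslope (u t - x t)
  have h1 : deriv V (u t - x t) * (r - x t) ≤ c₄ * |u t - x t| * |r - x t| := by
    calc deriv V (u t - x t) * (r - x t) ≤ |deriv V (u t - x t) * (r - x t)| := le_abs_self _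
    _ = |deriv V (u t - x t)| * |r - x t| := abs_mul _ _
    _ ≤ c₄ * |u t - x t| * |r - x t| :=
        mul_le_mul_of_nonneg_right hslope (abs_nonneg _)
  have h2 : (u t - x t) * (r - x t) ≤ |u t - x t| * |r - x t| := by
    calc (u t - x t) * (r - x t) ≤ |(u t - x t) * (r - x t)| := le_abs_self _
    _ = |u t - x t| * |r - x t| := abs_mul _ _
  nlinarith [mul_le_mul_of_nonneg_left h1 hlam.le, mul_le_mul_of_nonneg_left h2 hlam.le]
end

section
/- Let f : ℝ × ℝ → ℝ and define f̄(ē, u) = −f(u − ē, u). Let α₃, α₄ : [0, ∞) → [0, ∞) be continuous, strictly increasing functions with α₃(0) = α₄(0) = 0 (class-K functions). Suppose V : ℝ → ℝ is differentiable and for all ē, u ∈ ℝ: V′(ē)·f̄(ē, u) ≤ −α₃(|ē|) and |V′(ē)| ≤ α₄(|ē|). Suppose there exists σ > 0 such that α₃(s) > σ·(¼(α₄(s) + s)² + α₄(s)·s) for all s > 0, and let 0 < λ < σ. Let r ∈ ℝ and let x, u : [0, ∞) → ℝ be differentiable with ẋ(t) = f(x(t), u(t)) and u̇(t) = λ(r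 − x(t)). Set ē(t) = u(t) − x(t) and V̄(t) = V(ē(t)) + ½(r − u(t))². Then for every t ≥ 0 at which (ē(t), r − u(t)) ≠ (0, 0), the derivative satisfies d/dt V̄(t) < 0. -/
private lemma key_ineq (lam σ a b s w e z F : ℝ) (hl : 0 < lam) (hls : lam < σ)
    (hb : 0 ≤ b) (hs : 0 < s)
    (hw : |w| ≤ b) (he : |e| = s)
    (hd : w * (-F) ≤ -a)
    (hbd : σ * ((b + s) ^ 2 / 4 + b * s) < a) :
    w * (lam * (z + e) - F) + z * (-(lam * (z + e))) < 0 := by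
  have hw1 : w ≤ b := (abs_le.mp hw).2
  have hw2 : -b ≤ w := (abs_le.mp hw).1
  have he1 : e ≤ s := he ▸ le_abs_self e
  have he2 : -s ≤ e := he ▸ neg_abs_le e
  have hz1 : z ≤ |z| := le_abs_self z
  have hz2 : -|z| ≤ z := neg_abs_le z
  have hz3 : |z| ^ 2 = z ^ 2 := sq_abs z
  have haz : 0 ≤ |z| := abs_nonneg z
  have h1 : w * z ≤ b * |z| := by nlinarith
  have h2 : w * e ≤ b * s := by nlinarith
  have h3 : -(z * e) ≤ |z| * s := by nlinarith
  have h4 : (b + s) * |z| - |z| ^ 2 ≤ (b + s) ^ 2 / 4 := by nlinarith [sq_nonneg (b + s - 2 * |z|)]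
  have hmid : lam * (w * z + w * e - z ^ 2 - z * e) < a := by
    have h5 : lam * ((b + s) ^ 2 / 4 + b * s) < σ * ((b + s) ^ 2 / 4 + b * s) := by
      have : 0 < (b + s) ^ 2 / 4 + b * s := by nlinarith
      nlinarith
    nlinarith
  nlinarith [hmid]

/-- Theorem 2: for a first-order plant whose open-loop error is globally
asymptotically stable with converse-Lyapunov class-K estimates `α₃, α₄`, if
`α₃(s) > σ(¼(α₄(s)+s)² + α₄(s)s)` for all `s > 0` and `0 < λ < σ`, then along
closed-loop trajectories the Lyapunov function `V̄ = V(ē) + ½(r−u)²` is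
strictly decreasing away from the equilibrium. -/
theorem first_order_asymptotic_stability
    (f : ℝ → ℝ → ℝ)
    (α₃ α₄ : ℝ → ℝ)
    (hα₃cont : ContinuousOn α₃ (Set.Ici 0)) (hα₄cont : ContinuousOn α₄ (Set.Ici 0))
    (hα₃mono : StrictMonoOn α₃ (Set.Ici 0)) (hα₄mono : StrictMonoOn α₄ (Set.Ici 0))
    (hα₃zero : α₃ 0 = 0) (hα₄zero : α₄ 0 = 0)
    (V : ℝ → ℝ) (hV : Differentiable ℝ V)
    (hVdecay : ∀ ebar u : ℝ, deriv V ebar * (-f (u - ebar) u) ≤ -α₃ |ebar|)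
    (hVslope : ∀ ebar : ℝ, |deriv V ebar| ≤ α₄ |ebar|)
    (σ : ℝ) (hσ : 0 < σ)
    (hσbound : ∀ s : ℝ, 0 < s →
      σ * ((α₄ s + s) ^ 2 / 4 + α₄ s * s) < α₃ s)
    (lam : ℝ) (hlam : 0 < lam) (hlamσ : lam < σ)
    (r : ℝ) (x u : ℝ → ℝ)
    (hx : ∀ t, 0 ≤ t → HasDerivAt x (f (x t) (u t)) t)
    (hu : ∀ t, 0 ≤ t → HasDerivAt u (lam * (r - x t)) t) :
    ∀ t, 0 ≤ t → (u t - x t, r - u t) ≠ (0, 0) →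
      DifferentiableAt ℝ (fun s => V (u s - x s) + (r - u s) ^ 2 / 2) t ∧
      deriv (fun s => V (u s - x s) + (r - u s) ^ 2 / 2) t < 0 := by
  intro t ht hne
  have hxt := hx t ht
  have hut := hu t ht
  set e : ℝ := u t - x t with hedef
  set z : ℝ := r - u t with hzdef
  have hrx : r - x t = z + e := by rw [hzdef, hedef]; ring
  have hediff : HasDerivAt (fun s => u s - x s) (lam * (r - x t) - f (x t) (u t)) t :=
    hut.sub hxt
  have hVe : HasDerivAt (fun s => V (u s - x s))
      (deriv V e * (lam * (r - x t) - f (x t) (u t))) t :=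
    (hV e).hasDerivAt.comp t hediff
  have hru : HasDerivAt (fun s => r - u s) (-(lam * (r - x t))) t :=
    ((hasDerivAt_const t r).sub hut).congr_deriv (by ring)
  have hq : HasDerivAt (fun s => (r - u s) ^ 2 / 2) (z * (-(lam * (r - x t)))) t := by
    have := (hru.pow 2).div_const 2
    exact this.congr_deriv (by rw [hzdef]; norm_num; ring)
  have htot : HasDerivAt (fun s => V (u s - x s) + (r - u s) ^ 2 / 2)
      (deriv V e * (lam * (r - x t) - f (x t) (u t)) + z * (-(lam * (r - x t)))) t :=
    hVe.add hq
  refine ⟨htot.differentiableAt, ?_⟩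
  rw [htot.deriv, hrx]
  have hfd : deriv V e * (-f (u t - e) (u t)) ≤ -α₃ |e| := hVdecay e (u t)
  have hxe : u t - e = x t := by simp [hedef]
  rw [hxe] at hfd
  have hsl := hVslope e
  by_cases hez : e = 0
  · -- then z ≠ 0
    have hzne : z ≠ 0 := by
      intro hz0
      apply hne
      simp [hedef, hzdef] at hez hz0 ⊢
      constructor <;> [exact hez; exact hz0]
    have hw0 : deriv V e = 0 := by
      have : |deriv V e| ≤ 0 := by simpa [hez, hα₄zero] using hsl
      simpa [abs_nonpos_iff] using this
    rw [hw0, hez]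
    have : 0 < lam * z ^ 2 := by positivity
    nlinarith
  · have hs : 0 < |e| := abs_pos.mpr hez
    have hb : 0 ≤ α₄ |e| := (abs_nonneg _).trans hsl
    exact key_ineq lam σ (α₃ |e|) (α₄ |e|) (|e|) (deriv V e) e z (f (x t) (u t))
      hlam hlamσ hb hs hsl rfl hfd (hσbound _ hs)
end

section
/- Let n ≥ 1, let F : ℝⁿ × ℝ → ℝⁿ, and let V : ℝⁿ → ℝ be differentiable with constants c₁, c₂, c₃, c₄ > 0 such that for all E ∈ ℝⁿ and u ∈ ℝ: c₁‖E‖² ≤ V(E) ≤ c₂‖E‖², ⟨∇V(E), F(E, u)⟩ ≤ −c₃‖E‖², and ‖∇V(E)‖ ≤ c₄‖E‖. Let m ≥ 0, r ∈ ℝ, and let 0 < λ < 4c₃/[1 + c₄(1 + m)]². Let E : [0, ∞) → ℝⁿ, u : [0, ∞) → ℝ be differentiable and G : [0, ∞) → ℝⁿ satisfy ‖G(t)‖ ≤ 1 + m for all t, with Ė(t) = F(E(t), u(t)) + G(t)·u̇(t) and u̇(t) = λ·e(t), where e(t) = r − u(t) + E₁(t) and E₁ denotes the first coordinate of E. Then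 there exists κ > 0 such that V̄(t) = V(E(t)) + ½(r − u(t))² satisfies V̄(t) ≤ V̄(0)·e^{−κt} for all t ≥ 0; hence E(t) → 0 and u(t) → r exponentially. -/
/-! Along a trajectory, with `q = r - u + E₁` (so that `u̇ = λ q` and `r - u = q - E₁`), the
closed-loop Lyapunov function has derivative `V̄' = ⟪∇V, F⟫ + λ q ⟪∇V, G⟫ - λ q (q - E₁)`. The
Lyapunov bounds, `‖G‖ ≤ 1 + m` and `|E₁| ≤ ‖E‖` bound this by the quadratic form
`-c₃ a² + λ (1 + K) a |q| - λ q²` in `(a, |q|) = (‖E‖, |q|)`, where `K = c₄ (1 + m)`. The gain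
bound `λ (1 + K)² < 4 c₃` says exactly that this form is negative definite, so
`V̄' ≤ -ε (‖E‖² + q²) ≤ -κ V̄`, and Grönwall gives `V̄ t ≤ V̄ 0 e^{-κ t}`. Since `V̄` dominates
`‖E‖²` and `(u - r)²`, both decay at rate `κ / 2`. -/

open Real InnerProductSpace

open scoped RealInnerProductSpace

theorem exists_pos_quadratic_le_neg_mul {c lam b : ℝ} (hlam : 0 < lam)
    (hdisc : lam * b ^ 2 < 4 * c) :
    ∃ ε > 0, ∀ a q : ℝ, -c * a ^ 2 + lam * b * a * q - lam * q ^ 2 ≤ -ε * (a ^ 2 + q ^ 2) := by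
  have hc : 0 < c := by nlinarith [sq_nonneg b]
  -- this `ε` makes `4 (c - ε) (lam - ε) = lam² b² + 4 ε²`
  set ε := (4 * lam * c - lam ^ 2 * b ^ 2) / (4 * (lam + c)) with hε_def
  have hε_mul : ε * (4 * (lam + c)) = 4 * lam * c - lam ^ 2 * b ^ 2 := by
    rw [hε_def]; field_simp
  have hε : 0 < ε := div_pos (by nlinarith) (by positivity)
  have hεc : ε < c := by rw [hε_def, div_lt_iff₀ (by positivity)]; nlinarith
  refine ⟨ε, hε, fun a q => ?_⟩
  nlinarith [sq_nonneg (2 * (c - ε) * a - lam * b * q), sq_nonneg ε, sq_nonneg q,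
    mul_pos (sub_pos.mpr hεc) (sub_pos.mpr hεc)]

theorem le_mul_exp_of_hasDerivAt_le_neg_mul {W W' : ℝ → ℝ} {κ : ℝ}
    (hW : ∀ t, 0 ≤ t → HasDerivAt W (W' t) t) (hW' : ∀ t, 0 ≤ t → W' t ≤ -κ * W t) :
    ∀ t, 0 ≤ t → W t ≤ W 0 * exp (-κ * t) := by
  intro t ht
  have h := le_gronwallBound_of_liminf_deriv_right_le (f := W) (f' := W') (K := -κ) (ε := 0)
    (b := t) (fun s hs => (hW s hs.1).continuousAt.continuousWithinAt)
    (fun s hs _ hr => (hW s hs.1).hasDerivWithinAt.liminf_right_slope_le hr) le_rfl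
    (fun s hs => by simpa using hW' s hs.1) t ⟨ht, le_rfl⟩
  simpa [gronwallBound_ε0] using h

theorem le_sqrt_div_mul_exp_of_mul_sq_le {c x B κ t : ℝ} (hc : 0 < c) (hx : 0 ≤ x)
    (h : c * x ^ 2 ≤ B * exp (-κ * t)) : x ≤ √(B / c) * exp (-(κ / 2) * t) :=
  calc x = √(x ^ 2) := (sqrt_sq hx).symm
    _ ≤ √(B / c * exp (-κ * t)) :=
        sqrt_le_sqrt (by rw [div_mul_eq_mul_div, le_div_iff₀ hc]; linarith)
    _ = √(B / c) * exp (-(κ / 2) * t) := by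
        rw [sqrt_mul' _ (exp_pos _).le, ← exp_half]; ring_nf

theorem add_sub_sq_div_two_le {c v a e q : ℝ} (hc : 0 ≤ c) (hv : v ≤ c * a ^ 2) (he : |e| ≤ a) :
    v + (q - e) ^ 2 / 2 ≤ (c + 1) * (a ^ 2 + q ^ 2) := by
  have : e ^ 2 ≤ a ^ 2 := by rw [← sq_abs]; exact pow_le_pow_left₀ (abs_nonneg e) he 2
  nlinarith [sq_nonneg (q + e), sq_nonneg q]

section InnerProductSpace

variable {H : Type*} [NormedAddCommGroup H] [InnerProductSpace ℝ H]

theorem HasGradientAt.comp_hasDerivAt [CompleteSpace H] {V : H → ℝ} {g : H} {γ : ℝ → H} {γ' : H}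
    {t : ℝ} (hV : HasGradientAt V g (γ t)) (hγ : HasDerivAt γ γ' t) :
    HasDerivAt (fun s => V (γ s)) ⟪g, γ'⟫ t := by
  have h := hV.hasFDerivAt.comp_hasDerivAt t hγ
  rwa [toDual_apply_apply] at h

theorem inner_add_smul_sub_mul_le {g f G : H} {a e q c K lam : ℝ} (hlam : 0 ≤ lam)
    (hf : ⟪g, f⟫ ≤ -c * a ^ 2) (hgG : ‖g‖ * ‖G‖ ≤ K * a) (he : |e| ≤ a) :
    ⟪g, f + (lam * q) • G⟫ - lam * q * (q - e) ≤
      -c * a ^ 2 + lam * (1 + K) * a * |q| - lam * q ^ 2 := by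
  have hG : q * ⟪g, G⟫ ≤ |q| * (K * a) :=
    calc q * ⟪g, G⟫ ≤ |q| * |⟪g, G⟫| := by rw [← abs_mul]; exact le_abs_self _
      _ ≤ |q| * (K * a) := by
          gcongr; exact (abs_real_inner_le_norm g G).trans hgG
  have he : q * e ≤ |q| * a :=
    calc q * e ≤ |q| * |e| := by rw [← abs_mul]; exact le_abs_self _
      _ ≤ |q| * a := by gcongr
  rw [inner_add_right, real_inner_smul_right]
  nlinarith [mul_le_mul_of_nonneg_left hG hlam, mul_le_mul_of_nonneg_left he hlam]

theorem inner_add_smul_sub_mul_le_neg_mul {g f G : H} {a e q c₂ c₃ K lam ε v : ℝ}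
    (hlam : 0 ≤ lam) (hc₂ : 0 ≤ c₂) (hε : 0 ≤ ε)
    (hquad : ∀ a q : ℝ, -c₃ * a ^ 2 + lam * (1 + K) * a * q - lam * q ^ 2 ≤ -ε * (a ^ 2 + q ^ 2))
    (hf : ⟪g, f⟫ ≤ -c₃ * a ^ 2) (hgG : ‖g‖ * ‖G‖ ≤ K * a) (he : |e| ≤ a) (hv : v ≤ c₂ * a ^ 2) :
    ⟪g, f + (lam * q) • G⟫ - lam * q * (q - e) ≤ -(ε / (c₂ + 1)) * (v + (q - e) ^ 2 / 2) :=
  calc _ ≤ -c₃ * a ^ 2 + lam * (1 + K) * a * |q| - lam * |q| ^ 2 := by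
        rw [sq_abs]; exact inner_add_smul_sub_mul_le hlam hf hgG he
    _ ≤ -ε * (a ^ 2 + q ^ 2) := by rw [← sq_abs q]; exact hquad _ _
    _ ≤ -(ε / (c₂ + 1)) * (v + (q - e) ^ 2 / 2) := by
        rw [neg_mul, neg_mul, neg_le_neg_iff, div_mul_eq_mul_div, div_le_iff₀ (by positivity)]
        nlinarith [mul_le_mul_of_nonneg_left (add_sub_sq_div_two_le hc₂ hv he (q := q)) hε]

end InnerProductSpace

theorem higher_order_exponential_stability_general
    (n : ℕ) (hn : 0 < n)
    (F : EuclideanSpace ℝ (Fin n) → ℝ → EuclideanSpace ℝ (Fin n))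
    (V : EuclideanSpace ℝ (Fin n) → ℝ) (hV : Differentiable ℝ V)
    (c₁ c₂ c₃ c₄ : ℝ) (hc₁ : 0 < c₁) (hc₂ : 0 < c₂) (hc₄ : 0 < c₄)
    (hVlow : ∀ E : EuclideanSpace ℝ (Fin n), c₁ * ‖E‖ ^ 2 ≤ V E)
    (hVhigh : ∀ E : EuclideanSpace ℝ (Fin n), V E ≤ c₂ * ‖E‖ ^ 2)
    (hVdecay : ∀ (E : EuclideanSpace ℝ (Fin n)) (u : ℝ),
      (inner ℝ (gradient V E) (F E u) : ℝ) ≤ -c₃ * ‖E‖ ^ 2)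
    (hVslope : ∀ E : EuclideanSpace ℝ (Fin n), ‖gradient V E‖ ≤ c₄ * ‖E‖)
    (m : ℝ) (hm : 0 ≤ m) (r lam : ℝ) (hlam : 0 < lam)
    (hlam' : lam < 4 * c₃ / (1 + c₄ * (1 + m)) ^ 2)
    (E : ℝ → EuclideanSpace ℝ (Fin n)) (u : ℝ → ℝ)
    (G : ℝ → EuclideanSpace ℝ (Fin n))
    (hG : ∀ t : ℝ, ‖G t‖ ≤ 1 + m)
    (hE : ∀ t, 0 ≤ t →
      HasDerivAt E
        (F (E t) (u t) + (lam * (r - u t + E t ⟨0, hn⟩)) • G t) t)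
    (hu : ∀ t, 0 ≤ t → HasDerivAt u (lam * (r - u t + E t ⟨0, hn⟩)) t) :
    ∃ κ > 0,
      (∀ t, 0 ≤ t →
        V (E t) + (r - u t) ^ 2 / 2
          ≤ (V (E 0) + (r - u 0) ^ 2 / 2) * Real.exp (-κ * t)) ∧
      ∃ M γ : ℝ, 0 < γ ∧
        (∀ t, 0 ≤ t → ‖E t‖ ≤ M * Real.exp (-γ * t)) ∧
        (∀ t, 0 ≤ t → |u t - r| ≤ M * Real.exp (-γ * t)) := by
  set K := c₄ * (1 + m)
  have hdisc : lam * (1 + K) ^ 2 < 4 * c₃ := by rwa [lt_div_iff₀ (by positivity)] at hlam'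
  obtain ⟨ε, hε, hquad⟩ := exists_pos_quadratic_le_neg_mul hlam hdisc
  set κ := ε / (c₂ + 1)
  set W : ℝ → ℝ := fun t => V (E t) + (r - u t) ^ 2 / 2
  set q : ℝ → ℝ := fun t => r - u t + E t ⟨0, hn⟩
  have hW : ∀ t, 0 ≤ t → HasDerivAt W
      (⟪gradient V (E t), F (E t) (u t) + (lam * q t) • G t⟫ - lam * q t * (q t - E t ⟨0, hn⟩)) t :=
    fun t ht => ((hV _).hasGradientAt.comp_hasDerivAt (hE t ht)).add
      ((((hu t ht).const_sub r).pow 2).div_const 2) |>.congr_deriv (by simp only [q]; ring)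
  have hW' : ∀ t, 0 ≤ t →
      ⟪gradient V (E t), F (E t) (u t) + (lam * q t) • G t⟫ - lam * q t * (q t - E t ⟨0, hn⟩)
        ≤ -κ * W t := fun t _ =>
    inner_add_smul_sub_mul_le_neg_mul hlam.le hc₂.le hε.le hquad (hVdecay _ _)
      ((mul_le_mul (hVslope _) (hG t) (norm_nonneg _) ((norm_nonneg _).trans (hVslope _))).trans_eq
        (by ring))
      (PiLp.norm_apply_le (E t) ⟨0, hn⟩) (hVhigh _) |>.trans_eq (by simp only [q, W]; ring)
  have hdecay := le_mul_exp_of_hasDerivAt_le_neg_mul hW hW'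
  have hc : 0 < min c₁ (1 / 2) := lt_min hc₁ one_half_pos
  have hWlow : ∀ t, min c₁ (1 / 2) * (‖E t‖ ^ 2 + |u t - r| ^ 2) ≤ W t := fun t => by
    have hE := mul_le_mul_of_nonneg_right (min_le_left c₁ (1 / 2)) (sq_nonneg ‖E t‖)
    have hu := mul_le_mul_of_nonneg_right (min_le_right c₁ (1 / 2)) (sq_nonneg (r - u t))
    rw [abs_sub_comm, sq_abs]
    linarith [hVlow (E t), show W t = V (E t) + (r - u t) ^ 2 / 2 from rfl]
  refine ⟨κ, by positivity, hdecay, √(W 0 / min c₁ (1 / 2)), κ / 2, by positivity,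
    fun t ht => le_sqrt_div_mul_exp_of_mul_sq_le hc (norm_nonneg _) ?_,
    fun t ht => le_sqrt_div_mul_exp_of_mul_sq_le hc (abs_nonneg _) ?_⟩
  · nlinarith [hWlow t, hdecay t ht, sq_nonneg |u t - r|]
  · nlinarith [hWlow t, hdecay t ht, sq_nonneg ‖E t‖]

/-- Higher-order extension: the normal-form error state `E` obeys
`Ė = F(E,u) + G u̇` with exponentially stable open-loop error dynamics `F`
(converse-Lyapunov function `V`), feedforward direction `‖G‖ ≤ 1 + m`, and
integral control `u̇ = λe`, `e = r − u + E₁`. For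
`0 < λ < 4c₃/[1 + c₄(1+m)]²`, the closed-loop Lyapunov function
`V̄ = V(E) + ½(r−u)²` decays exponentially and `E → 0`, `u → r` exponentially. -/
theorem higher_order_exponential_stability
    (n : ℕ) (hn : 0 < n)
    (F : EuclideanSpace ℝ (Fin n) → ℝ → EuclideanSpace ℝ (Fin n))
    (V : EuclideanSpace ℝ (Fin n) → ℝ) (hV : Differentiable ℝ V)
    (c₁ c₂ c₃ c₄ : ℝ) (hc₁ : 0 < c₁) (hc₂ : 0 < c₂) (hc₃ : 0 < c₃) (hc₄ : 0 < c₄)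
    (hVlow : ∀ E : EuclideanSpace ℝ (Fin n), c₁ * ‖E‖ ^ 2 ≤ V E)
    (hVhigh : ∀ E : EuclideanSpace ℝ (Fin n), V E ≤ c₂ * ‖E‖ ^ 2)
    (hVdecay : ∀ (E : EuclideanSpace ℝ (Fin n)) (u : ℝ),
      (inner ℝ (gradient V E) (F E u) : ℝ) ≤ -c₃ * ‖E‖ ^ 2)
    (hVslope : ∀ E : EuclideanSpace ℝ (Fin n), ‖gradient V E‖ ≤ c₄ * ‖E‖)
    (m : ℝ) (hm : 0 ≤ m) (r lam : ℝ) (hlam : 0 < lam)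
    (hlam' : lam < 4 * c₃ / (1 + c₄ * (1 + m)) ^ 2)
    (E : ℝ → EuclideanSpace ℝ (Fin n)) (u : ℝ → ℝ)
    (G : ℝ → EuclideanSpace ℝ (Fin n))
    (hG : ∀ t : ℝ, ‖G t‖ ≤ 1 + m)
    (hE : ∀ t, 0 ≤ t →
      HasDerivAt E
        (F (E t) (u t) + (lam * (r - u t + E t ⟨0, hn⟩)) • G t) t)
    (hu : ∀ t, 0 ≤ t → HasDerivAt u (lam * (r - u t + E t ⟨0, hn⟩)) t) :
    ∃ κ > 0,
      (∀ t, 0 ≤ t →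
        V (E t) + (r - u t) ^ 2 / 2
          ≤ (V (E 0) + (r - u 0) ^ 2 / 2) * Real.exp (-κ * t)) ∧
      ∃ M γ : ℝ, 0 < γ ∧
        (∀ t, 0 ≤ t → ‖E t‖ ≤ M * Real.exp (-γ * t)) ∧
        (∀ t, 0 ≤ t → |u t - r| ≤ M * Real.exp (-γ * t)) :=
  higher_order_exponential_stability_general n hn F V hV c₁ c₂ c₃ c₄ hc₁ hc₂ hc₄ hVlow hVhigh
    hVdecay hVslope m hm r lam hlam hlam' E u G hG hE hu
end

section
/- Let 0 < ζ < 1, ωₙ > 0, β > 0, set ω_d² = ωₙ²(1 − ζ²), and define f(z) = min(z², β²). Let e : ℝ → ℝ be twice differentiable and satisfy ë(t) + 2ζωₙ·ė(t) + [1 + f(e(t))]·ωₙ²·e(t) = 0 for all t. Define V(t) = ½(ė(t) + ζωₙ·e(t))² + ½·ω_d²·e(t)² + ωₙ²·∫₀^{e(t)} f(z)·z dz. Then V is differentiable and for all t: V′(t) = −ζωₙ·[(ė(t) + ζωₙ·e(t))² + ω_d²·e(t)²] − ζωₙ³·f(e(t))·e(t)² ≤ 0. -/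
/-- Lyapunov-derivative computation for the nonlinear mass–spring–damper
`ë + 2ζωₙė + [1 + f(e)]ωₙ²e = 0` with `f(z) = min(z², β²)`: the Lyapunov
function `V = ½(ė + ζωₙe)² + ½ω_d²e² + ωₙ²∫₀^e f(z)z dz` is differentiable with
`V̇ = −ζωₙ[(ė + ζωₙe)² + ω_d²e²] − ζωₙ³f(e)e² ≤ 0`. -/
theorem msd_lyapunov_derivative
    (ζ ωn β : ℝ) (hζ : 0 < ζ) (hζ' : ζ < 1) (hωn : 0 < ωn) (hβ : 0 < β)
    (e e' : ℝ → ℝ)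
    (he : ∀ t : ℝ, HasDerivAt e (e' t) t)
    (he' : ∀ t : ℝ, HasDerivAt e'
      (-(2 * ζ * ωn * e' t + (1 + min ((e t) ^ 2) (β ^ 2)) * ωn ^ 2 * e t)) t) :
    ∀ t : ℝ,
      HasDerivAt
        (fun s => (e' s + ζ * ωn * e s) ^ 2 / 2
          + ωn ^ 2 * (1 - ζ ^ 2) * (e s) ^ 2 / 2
          + ωn ^ 2 * ∫ z in (0:ℝ)..(e s), min (z ^ 2) (β ^ 2) * z)
        (-(ζ * ωn) * ((e' t + ζ * ωn * e t) ^ 2 + ωn ^ 2 * (1 - ζ ^ 2) * (e t) ^ 2)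
          - ζ * ωn ^ 3 * min ((e t) ^ 2) (β ^ 2) * (e t) ^ 2) t ∧
      (-(ζ * ωn) * ((e' t + ζ * ωn * e t) ^ 2 + ωn ^ 2 * (1 - ζ ^ 2) * (e t) ^ 2)
          - ζ * ωn ^ 3 * min ((e t) ^ 2) (β ^ 2) * (e t) ^ 2) ≤ 0 := by
  intro t
  have hcont : Continuous (fun z : ℝ => min (z ^ 2) (β ^ 2) * z) := by
    exact ((continuous_pow 2).min continuous_const).mul continuous_id
  -- derivative of the integral term
  have hF : HasDerivAt (fun s => ∫ z in (0:ℝ)..(e s), min (z ^ 2) (β ^ 2) * z)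
      (min ((e t) ^ 2) (β ^ 2) * e t * e' t) t := by
    exact ((hcont.integral_hasStrictDerivAt 0 (e t)).hasDerivAt).comp t (he t)
  have h1 : HasDerivAt (fun s => e' s + ζ * ωn * e s)
      (-(2 * ζ * ωn * e' t + (1 + min ((e t) ^ 2) (β ^ 2)) * ωn ^ 2 * e t)
        + ζ * ωn * e' t) t := (he' t).add ((he t).const_mul (ζ * ωn))
  have h2 := (h1.pow 2).div_const 2
  have h3 := (((he t).pow 2).const_mul (ωn ^ 2 * (1 - ζ ^ 2))).div_const 2
  have h4 := hF.const_mul (ωn ^ 2)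
  have := (h2.add h3).add h4
  constructor
  · refine this.congr_deriv ?_
    norm_num
    ring
  · have hf0 : 0 ≤ min ((e t) ^ 2) (β ^ 2) := le_min (sq_nonneg _) (sq_nonneg _)
    have hωd : 0 ≤ ωn ^ 2 * (1 - ζ ^ 2) := mul_nonneg (sq_nonneg ωn) (by nlinarith)
    nlinarith [sq_nonneg (e' t + ζ * ωn * e t), sq_nonneg (e t),
      mul_nonneg hf0 (sq_nonneg (e t)), mul_pos hζ hωn,
      mul_nonneg hωd (sq_nonneg (e t)), pow_pos hωn 3,
      mul_nonneg (mul_nonneg hζ.le (pow_pos hωn 3).le) (mul_nonneg hf0 (sq_nonneg (e t)))]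
end

section
/- Let g : ℝ → ℝ be continuous and let 0 < b ≤ g(x) for all x ∈ ℝ. Let r ∈ ℝ and let 0 < λ < b. Then there exists κ > 0 such that every pair of differentiable functions x, u : [0, ∞) → ℝ satisfying ẋ(t) = −g(x(t))·(x(t) − u(t)) and u̇(t) = λ·(r − x(t)) obeys V̄(t) ≤ V̄(0)·e^{−κt} for all t ≥ 0, where V̄(t) = ½(u(t) − x(t))² + ½(u(t) − r)²; consequently x(t) → r and u(t) → r exponentially as t → ∞. -/
/-- Theorem 1 specialized to a first-order affine plant `ẋ = −g(x)(x − u)` with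
`g ≥ b > 0`, under integral control `u̇ = λ(r − x)` with `0 < λ < b`: the
closed-loop Lyapunov function `V̄ = ½(u−x)² + ½(u−r)²` decays exponentially,
and `x`, `u` converge exponentially to `r`. -/
theorem affine_closed_loop_exponential_stability
    (g : ℝ → ℝ) (hg : Continuous g) (b : ℝ) (hb : 0 < b)
    (hgb : ∀ x : ℝ, b ≤ g x)
    (r lam : ℝ) (hlam : 0 < lam) (hlam' : lam < b) :
    ∃ κ > 0, ∀ x u : ℝ → ℝ,
      (∀ t, 0 ≤ t → HasDerivAt x (-g (x t) * (x t - u t)) t) →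
      (∀ t, 0 ≤ t → HasDerivAt u (lam * (r - x t)) t) →
      (∀ t, 0 ≤ t →
        (u t - x t) ^ 2 / 2 + (u t - r) ^ 2 / 2
          ≤ ((u 0 - x 0) ^ 2 / 2 + (u 0 - r) ^ 2 / 2) * Real.exp (-κ * t)) ∧
      ∃ M γ : ℝ, 0 < γ ∧
        (∀ t, 0 ≤ t → |x t - r| ≤ M * Real.exp (-γ * t)) ∧
        (∀ t, 0 ≤ t → |u t - r| ≤ M * Real.exp (-γ * t)) := by
  set κ := min (b - lam) lam with hκdef
  have hκpos : 0 < κ := lt_min (by linarith) hlam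
  refine ⟨κ, hκpos, fun x u hx hu => ?_⟩
  set V : ℝ → ℝ := fun s => (u s - x s) ^ 2 / 2 + (u s - r) ^ 2 / 2 with hVdef
  set F : ℝ → ℝ := fun s => V s * Real.exp (κ * s) with hFdef
  -- derivative of V
  have hV : ∀ t, 0 ≤ t → HasDerivAt V
      ((u t - x t) * (lam * (r - x t) - (-g (x t) * (x t - u t)))
        + (u t - r) * (lam * (r - x t))) t := by
    intro t ht
    have h1 := (((hu t ht).sub (hx t ht)).pow 2).div_const 2
    have h2 := (((hu t ht).sub (hasDerivAt_const t r)).pow 2).div_const 2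
    have := h1.add h2
    refine this.congr_deriv ?_
    simp only [Pi.sub_apply]
    ring
  have hF : ∀ t, 0 ≤ t → HasDerivAt F
      (((u t - x t) * (lam * (r - x t) - (-g (x t) * (x t - u t)))
        + (u t - r) * (lam * (r - x t)) + κ * V t) * Real.exp (κ * t)) t := by
    intro t ht
    have he : HasDerivAt (fun s => Real.exp (κ * s)) (Real.exp (κ * t) * κ) t := by
      simpa using ((hasDerivAt_id t).const_mul κ).exp
    have := (hV t ht).mul he
    refine this.congr_deriv ?_
    ring
  have hF' : ∀ t, 0 ≤ t →
      ((u t - x t) * (lam * (r - x t) - (-g (x t) * (x t - u t)))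
        + (u t - r) * (lam * (r - x t)) + κ * V t) * Real.exp (κ * t) ≤ 0 := by
    intro t ht
    have hG : b ≤ g (x t) := hgb (x t)
    have h1 : κ ≤ b - lam := min_le_left _ _
    have h2 : κ ≤ lam := min_le_right _ _
    have hexp : 0 < Real.exp (κ * t) := Real.exp_pos _
    have key : (u t - x t) * (lam * (r - x t) - (-g (x t) * (x t - u t)))
        + (u t - r) * (lam * (r - x t)) + κ * V t ≤ 0 := by
      have hVval : V t = (u t - x t) ^ 2 / 2 + (u t - r) ^ 2 / 2 := rfl
      rw [hVval]
      nlinarith [sq_nonneg (u t - x t), sq_nonneg (u t - r), sq_nonneg (u t - x t - (u t - r))]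
    exact mul_nonpos_of_nonpos_of_nonneg key hexp.le
  have hanti : AntitoneOn F (Set.Ici (0:ℝ)) := by
    apply antitoneOn_of_deriv_nonpos (convex_Ici 0)
    · intro t ht
      exact ((hF t ht).continuousAt).continuousWithinAt
    · intro t ht
      rw [interior_Ici] at ht
      exact (hF t (le_of_lt ht)).differentiableAt.differentiableWithinAt
    · intro t ht
      rw [interior_Ici] at ht
      rw [(hF t (le_of_lt ht)).deriv]
      exact hF' t (le_of_lt ht)
  have hVbound : ∀ t, 0 ≤ t → V t ≤ V 0 * Real.exp (-κ * t) := by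
    intro t ht
    have hle : F t ≤ F 0 := hanti (Set.self_mem_Ici) ht ht
    have hF0 : F 0 = V 0 := by simp [hFdef]
    have hexp : 0 < Real.exp (κ * t) := Real.exp_pos _
    rw [hF0] at hle
    have : V t * Real.exp (κ * t) ≤ V 0 := hle
    rw [neg_mul, Real.exp_neg]
    rw [le_mul_inv_iff₀ hexp]
    linarith [this]
  have hV0 : 0 ≤ V 0 := by positivity
  refine ⟨hVbound, 2 * Real.sqrt (2 * V 0), κ / 2, by positivity, ?_, ?_⟩
  · intro t ht
    have hVt := hVbound t ht
    have hs : Real.sqrt (2 * (V 0 * Real.exp (-κ * t)))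
        = Real.sqrt (2 * V 0) * Real.exp (-(κ/2) * t) := by
      rw [show 2 * (V 0 * Real.exp (-κ * t)) = (2 * V 0) * Real.exp (-κ * t) by ring,
        Real.sqrt_mul (by positivity), show (-κ * t) = (-(κ/2) * t) + (-(κ/2) * t) by ring,
        Real.exp_add, Real.sqrt_mul_self (Real.exp_pos _).le]
    have hxu : |u t - x t| ≤ Real.sqrt (2 * V 0) * Real.exp (-(κ/2) * t) := by
      rw [← hs, ← Real.sqrt_sq_eq_abs]
      apply Real.sqrt_le_sqrt
      have : (u t - x t) ^ 2 ≤ 2 * V t := by simp [hVdef]; nlinarith [sq_nonneg (u t - r)]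
      linarith
    have hur : |u t - r| ≤ Real.sqrt (2 * V 0) * Real.exp (-(κ/2) * t) := by
      rw [← hs, ← Real.sqrt_sq_eq_abs]
      apply Real.sqrt_le_sqrt
      have : (u t - r) ^ 2 ≤ 2 * V t := by simp [hVdef]; nlinarith [sq_nonneg (u t - x t)]
      linarith
    calc |x t - r| ≤ |u t - x t| + |u t - r| := by
          have := abs_sub_abs_le_abs_sub (x t) r
          calc |x t - r| = |(u t - r) - (u t - x t)| := by ring_nf
            _ ≤ |u t - r| + |u t - x t| := abs_sub _ _
            _ = |u t - x t| + |u t - r| := by ring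
      _ ≤ 2 * Real.sqrt (2 * V 0) * Real.exp (-(κ/2) * t) := by linarith
  · intro t ht
    have hVt := hVbound t ht
    have hs : Real.sqrt (2 * (V 0 * Real.exp (-κ * t)))
        = Real.sqrt (2 * V 0) * Real.exp (-(κ/2) * t) := by
      rw [show 2 * (V 0 * Real.exp (-κ * t)) = (2 * V 0) * Real.exp (-κ * t) by ring,
        Real.sqrt_mul (by positivity), show (-κ * t) = (-(κ/2) * t) + (-(κ/2) * t) by ring,
        Real.exp_add, Real.sqrt_mul_self (Real.exp_pos _).le]
    have hur : |u t - r| ≤ Real.sqrt (2 * V 0) * Real.exp (-(κ/2) * t) := by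
      rw [← hs, ← Real.sqrt_sq_eq_abs]
      apply Real.sqrt_le_sqrt
      have : (u t - r) ^ 2 ≤ 2 * V t := by simp [hVdef]; nlinarith [sq_nonneg (u t - x t)]
      linarith
    have hM : 0 ≤ Real.sqrt (2 * V 0) * Real.exp (-(κ/2) * t) := by positivity
    linarith
end
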